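/- arXiv:2409.14156 — 2 statements merged into one kernel-verified Lean document; each statement's English description precedes it below -/
import Mathlib

section
/- Let 0 < q < 1, ν > 0, s > 0, and b ≥ (2-q)·(νsq/(1-q)^(1-q))^(1/(2-q)). Let t₁ ≤ t₂ be roots of t + νsq·t^(q-1) = b in (0,∞). Then h(t) = νt^q + t²/(2s) − (b/s)t is strictly increasing on [0,t₁] and on [t₂,∞), strictly decreasing on [t₁,t₂], and in particular h(t₂) ≤ h(t₁). -/
/-!
Up to the factor `1 / s`, the derivative of `h` at `t > 0` is `g t - b` with
`g t = t + ν s q t^(q-1)`. The function `g` decreases on `(0, t̂]` and increases on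
`[t̂, ∞)`, where `t̂ = (ν s q (1 - q))^(1/(2-q))` is its critical point. Since `t₁ ≤ t̂ ≤ t₂`
both solve `g t = b`, we get `g > b` on `(0, t₁)` and on `(t₂, ∞)` and `g < b` on
`(t₁, t₂)`, which is the claimed monotonicity pattern of `h`.
-/

open Real Set

section Valley

variable {c q : ℝ}

theorem hasDerivAt_add_mul_rpow {t : ℝ} (ht : 0 < t) :
    HasDerivAt (fun t => t + c * t ^ (q - 1)) (1 - c * (1 - q) / t ^ (2 - q)) t := by
  refine ((hasDerivAt_id t).add
    ((hasDerivAt_rpow_const (p := q - 1) (.inl ht.ne')).const_mul c)).congr_deriv ?_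
  rw [show q - 1 - 1 = -(2 - q) by ring, rpow_neg ht.le]
  simp only [div_eq_mul_inv]
  ring

theorem strictAntiOn_add_mul_rpow (hc : 0 < c) (hq : q < 1) :
    StrictAntiOn (fun t => t + c * t ^ (q - 1))
      (Ioc 0 ((c * (1 - q)) ^ ((1 : ℝ) / (2 - q)))) := by
  refine strictAntiOn_of_hasDerivWithinAt_neg (convex_Ioc _ _)
    (fun x hx => (hasDerivAt_add_mul_rpow hx.1).continuousAt.continuousWithinAt)
    (fun x hx => (hasDerivAt_add_mul_rpow (interior_subset hx).1).hasDerivWithinAt) ?_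
  rw [interior_Ioc]
  rintro x ⟨hx0, hxt⟩
  rw [one_div, lt_rpow_inv_iff_of_pos hx0.le (by nlinarith) (by linarith)] at hxt
  have : 1 < c * (1 - q) / x ^ (2 - q) := (one_lt_div (rpow_pos_of_pos hx0 _)).2 hxt
  linarith

theorem strictMonoOn_add_mul_rpow (hc : 0 < c) (hq : q < 1) :
    StrictMonoOn (fun t => t + c * t ^ (q - 1)) (Ici ((c * (1 - q)) ^ ((1 : ℝ) / (2 - q)))) := by
  have hpos : ∀ x ∈ Ici ((c * (1 - q)) ^ ((1 : ℝ) / (2 - q))), 0 < x :=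
    fun x hx => (rpow_pos_of_pos (by nlinarith) _).trans_le hx
  refine strictMonoOn_of_hasDerivWithinAt_pos (convex_Ici _)
    (fun x hx => (hasDerivAt_add_mul_rpow (hpos x hx)).continuousAt.continuousWithinAt)
    (fun x hx => (hasDerivAt_add_mul_rpow (hpos x (interior_subset hx))).hasDerivWithinAt) ?_
  rw [interior_Ici]
  intro x hxt
  have hx0 := hpos x (Ioi_subset_Ici_self hxt)
  rw [mem_Ioi, one_div, rpow_inv_lt_iff_of_pos (by nlinarith) hx0.le (by linarith)] at hxt
  have : c * (1 - q) / x ^ (2 - q) < 1 := (div_lt_one (rpow_pos_of_pos hx0 _)).2 hxt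
  linarith

end Valley

section Objective

variable {q ν s b : ℝ}

theorem hasDerivAt_objective (hs : s ≠ 0) {t : ℝ} (ht : 0 < t) :
    HasDerivAt (fun t => ν * t ^ q + t ^ 2 / (2 * s) - b / s * t)
      ((t + ν * s * q * t ^ (q - 1) - b) / s) t := by
  refine ((((hasDerivAt_rpow_const (p := q) (.inl ht.ne')).const_mul ν).add
    ((hasDerivAt_pow 2 t).div_const (2 * s))).sub
    ((hasDerivAt_id t).const_mul (b / s))).congr_deriv ?_
  field_simp
  ring

theorem continuous_objective (hq : 0 ≤ q) :
    Continuous (fun t => ν * t ^ q + t ^ 2 / (2 * s) - b / s * t) := by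
  have := continuous_rpow_const hq
  fun_prop

theorem strictMonoOn_objective (hq : 0 ≤ q) (hs : 0 < s) {D : Set ℝ} (hD : Convex ℝ D)
    (hg : ∀ x ∈ interior D, 0 < x ∧ b < x + ν * s * q * x ^ (q - 1)) :
    StrictMonoOn (fun t => ν * t ^ q + t ^ 2 / (2 * s) - b / s * t) D :=
  strictMonoOn_of_hasDerivWithinAt_pos hD (continuous_objective hq).continuousOn
    (fun x hx => (hasDerivAt_objective hs.ne' (hg x hx).1).hasDerivWithinAt)
    (fun x hx => div_pos (sub_pos.2 (hg x hx).2) hs)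

theorem strictAntiOn_objective (hq : 0 ≤ q) (hs : 0 < s) {D : Set ℝ} (hD : Convex ℝ D)
    (hg : ∀ x ∈ interior D, 0 < x ∧ x + ν * s * q * x ^ (q - 1) < b) :
    StrictAntiOn (fun t => ν * t ^ q + t ^ 2 / (2 * s) - b / s * t) D :=
  strictAntiOn_of_hasDerivWithinAt_neg hD (continuous_objective hq).continuousOn
    (fun x hx => (hasDerivAt_objective hs.ne' (hg x hx).1).hasDerivWithinAt)
    (fun x hx => div_neg_of_neg_of_pos (sub_neg.2 (hg x hx).2) hs)

end Objective

theorem stmt_2_general (q ν s b : ℝ) (hq0 : 0 < q) (hq1 : q < 1) (hν : 0 < ν) (hs : 0 < s)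
    (t₁ t₂ : ℝ) (ht₁ : 0 < t₁) (h12 : t₁ ≤ t₂)
    (hroot₁ : t₁ + ν * s * q * t₁ ^ (q - 1) = b)
    (hroot₂ : t₂ + ν * s * q * t₂ ^ (q - 1) = b)
    (hhat₁ : t₁ ≤ (ν * s * q * (1 - q)) ^ ((1 : ℝ) / (2 - q)))
    (hhat₂ : (ν * s * q * (1 - q)) ^ ((1 : ℝ) / (2 - q)) ≤ t₂)
    (h : ℝ → ℝ) (hh : ∀ t : ℝ, h t = ν * t ^ q + t ^ 2 / (2 * s) - (b / s) * t) :
    StrictMonoOn h (Set.Icc 0 t₁) ∧ StrictMonoOn h (Set.Ici t₂) ∧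
    StrictAntiOn h (Set.Icc t₁ t₂) ∧ h t₂ ≤ h t₁ := by
  have hc : 0 < ν * s * q := by positivity
  have hanti := strictAntiOn_add_mul_rpow hc hq1
  have hmono := strictMonoOn_add_mul_rpow hc hq1
  obtain rfl : h = _ := funext hh
  have hdec : StrictAntiOn _ (Icc t₁ t₂) :=
    strictAntiOn_objective hq0.le hs (convex_Icc t₁ t₂) <| by
      rw [interior_Icc]
      rintro x ⟨h1x, hx2⟩
      refine ⟨ht₁.trans h1x, ?_⟩
      rcases le_total x ((ν * s * q * (1 - q)) ^ ((1 : ℝ) / (2 - q))) with hx | hx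
      · exact (hanti ⟨ht₁, hhat₁⟩ ⟨ht₁.trans h1x, hx⟩ h1x).trans_eq hroot₁
      · exact (hmono hx hhat₂ hx2).trans_eq hroot₂
  refine ⟨strictMonoOn_objective hq0.le hs (convex_Icc 0 t₁) ?_,
    strictMonoOn_objective hq0.le hs (convex_Ici t₂) ?_, hdec,
    hdec.antitoneOn (left_mem_Icc.2 h12) (right_mem_Icc.2 h12) h12⟩
  · rw [interior_Icc]
    rintro x ⟨hx0, hx1⟩
    exact ⟨hx0,
      hroot₁.symm.trans_lt (hanti ⟨hx0, hx1.le.trans hhat₁⟩ ⟨ht₁, hhat₁⟩ hx1)⟩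
  · rw [interior_Ici]
    intro x hx
    exact ⟨ht₁.trans_le (h12.trans hx.le),
      hroot₂.symm.trans_lt (hmono hhat₂ (hhat₂.trans hx.le) hx)⟩

theorem stmt_2 (q ν s b : ℝ) (hq0 : 0 < q) (hq1 : q < 1) (hν : 0 < ν) (hs : 0 < s)
    (hb : (2 - q) * (ν * s * q / (1 - q) ^ (1 - q)) ^ ((1 : ℝ) / (2 - q)) ≤ b)
    (t₁ t₂ : ℝ) (ht₁ : 0 < t₁) (ht₂ : 0 < t₂) (h12 : t₁ ≤ t₂)
    (hroot₁ : t₁ + ν * s * q * t₁ ^ (q - 1) = b)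
    (hroot₂ : t₂ + ν * s * q * t₂ ^ (q - 1) = b)
    (hhat₁ : t₁ ≤ (ν * s * q * (1 - q)) ^ ((1 : ℝ) / (2 - q)))
    (hhat₂ : (ν * s * q * (1 - q)) ^ ((1 : ℝ) / (2 - q)) ≤ t₂)
    (h : ℝ → ℝ) (hh : ∀ t : ℝ, h t = ν * t ^ q + t ^ 2 / (2 * s) - (b / s) * t) :
    StrictMonoOn h (Set.Icc 0 t₁) ∧ StrictMonoOn h (Set.Ici t₂) ∧
    StrictAntiOn h (Set.Icc t₁ t₂) ∧ h t₂ ≤ h t₁ :=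
  stmt_2_general q ν s b hq0 hq1 hν hs t₁ t₂ ht₁ h12 hroot₁ hroot₂ hhat₁ hhat₂ h hh
end

section
/- For ν > 0 and q = 1/2, the scalar prox threshold constant satisfies: if |τ| < (3/2)ν^(2/3) then 0 is the unique minimizer of t ↦ ν|t|^(1/2) + (1/2)(t−τ)²; if |τ| = (3/2)ν^(2/3) then the minimizers are exactly {0, sign(τ)·ν^(2/3)}. -/
/-!
Write `ν = a³` and `s = √|t|`. Then `f t - f 0 = a³ s + s⁴ / 2 - t τ`, and this splits as
`(s / 2) (s - a)² (s + 2a) + |t| ((3/2) a² - |τ|) + (|t| |τ| - t τ)`, a sum of three nonnegative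
terms once `|τ| ≤ (3/2) a²`. Below the threshold the middle term is positive for `t ≠ 0`; at the
threshold the sum vanishes exactly when `t = 0`, or when `|t| = a²` and `t` has the sign of `τ`.
-/

open Real

noncomputable def proxObjective (ν τ t : ℝ) : ℝ := ν * |t| ^ ((1:ℝ)/2) + (t - τ) ^ 2 / 2

lemma eq_sign_mul_iff_abs_eq {τ r t : ℝ} (hτ : τ ≠ 0) (hr : 0 ≤ r) :
    t = sign τ * r ↔ |t| = r ∧ |t| * |τ| - t * τ = 0 := by
  rcases hτ.lt_or_gt with hneg | hpos
  · rw [sign_of_neg hneg, abs_of_neg hneg]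
    constructor
    · rintro rfl
      rw [abs_of_nonpos (by linarith)]
      exact ⟨by ring, by ring⟩
    · rintro ⟨habs, hsign⟩
      have : |t| = -t := by nlinarith
      linarith
  · rw [sign_of_pos hpos, abs_of_pos hpos]
    constructor
    · rintro rfl
      rw [one_mul, abs_of_nonneg hr]
      exact ⟨rfl, by ring⟩
    · rintro ⟨habs, hsign⟩
      have : |t| = t := by nlinarith
      linarith

lemma proxObjective_sub_proxObjective_zero (a τ t : ℝ) :
    proxObjective (a ^ 3) τ t - proxObjective (a ^ 3) τ 0 =
      √|t| / 2 * ((√|t| - a) ^ 2 * (√|t| + 2 * a)) + |t| * (3 / 2 * a ^ 2 - |τ|) +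
        (|t| * |τ| - t * τ) := by
  have hs : √|t| ^ 2 = |t| := sq_sqrt (abs_nonneg t)
  have ht : |t| ^ 2 = t ^ 2 := sq_abs t
  simp only [proxObjective, abs_zero, ← sqrt_eq_rpow, sqrt_zero]
  linear_combination (3 / 2 * a ^ 2 - √|t| ^ 2 / 2 - |t| / 2) * hs - ht / 2

section Threshold

variable {a τ : ℝ}

lemma proxObjective_zero_lt (ha : 0 < a) (hτ : |τ| < 3 / 2 * a ^ 2) {t : ℝ} (ht : t ≠ 0) :
    proxObjective (a ^ 3) τ 0 < proxObjective (a ^ 3) τ t := by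
  have hcubic : 0 ≤ √|t| / 2 * ((√|t| - a) ^ 2 * (√|t| + 2 * a)) := by positivity
  have hgap : 0 < |t| * (3 / 2 * a ^ 2 - |τ|) := mul_pos (abs_pos.2 ht) (by linarith)
  have hsign : t * τ ≤ |t| * |τ| := (abs_mul t τ ▸ le_abs_self (t * τ))
  linarith [proxObjective_sub_proxObjective_zero a τ t]

lemma proxObjective_zero_le (ha : 0 ≤ a) (hτ : |τ| ≤ 3 / 2 * a ^ 2) (t : ℝ) :
    proxObjective (a ^ 3) τ 0 ≤ proxObjective (a ^ 3) τ t := by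
  have hcubic : 0 ≤ √|t| / 2 * ((√|t| - a) ^ 2 * (√|t| + 2 * a)) := by positivity
  have hgap : 0 ≤ |t| * (3 / 2 * a ^ 2 - |τ|) := mul_nonneg (abs_nonneg t) (by linarith)
  have hsign : t * τ ≤ |t| * |τ| := (abs_mul t τ ▸ le_abs_self (t * τ))
  linarith [proxObjective_sub_proxObjective_zero a τ t]

lemma proxObjective_le_proxObjective_zero_iff (ha : 0 < a) (hτ : |τ| = 3 / 2 * a ^ 2) (t : ℝ) :
    proxObjective (a ^ 3) τ t ≤ proxObjective (a ^ 3) τ 0 ↔ t = 0 ∨ t = sign τ * a ^ 2 := by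
  have hτ0 : τ ≠ 0 := abs_pos.1 (hτ ▸ by positivity)
  have hcubic : 0 ≤ √|t| / 2 * ((√|t| - a) ^ 2 * (√|t| + 2 * a)) := by positivity
  have hsign : 0 ≤ |t| * |τ| - t * τ := sub_nonneg.2 (abs_mul t τ ▸ le_abs_self (t * τ))
  rw [← sub_nonpos, proxObjective_sub_proxObjective_zero, hτ.symm, sub_self, mul_zero, add_zero,
    eq_sign_mul_iff_abs_eq hτ0 (sq_nonneg a), ← sqrt_eq_iff_eq_sq (abs_nonneg t) ha.le]
  constructor
  · intro h
    have hcubic0 : √|t| / 2 * ((√|t| - a) ^ 2 * (√|t| + 2 * a)) = 0 := by linarith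
    have hroot : √|t| = 0 ∨ √|t| = a := by
      have : √|t| + 2 * a ≠ 0 := by positivity
      simpa [sub_eq_zero, this] using hcubic0
    rcases hroot with hzero | hroot
    · left
      simpa [sqrt_eq_zero (abs_nonneg t)] using hzero
    · exact Or.inr ⟨hroot, by linarith⟩
  · rintro (rfl | ⟨hroot, hsign0⟩)
    · simp
    · rw [hroot, hsign0]
      simp

end Threshold

theorem stmt_17 (ν τ : ℝ) (hν : 0 < ν)
    (f : ℝ → ℝ) (hf : ∀ t : ℝ, f t = ν * |t| ^ ((1:ℝ)/2) + (t - τ) ^ 2 / 2) :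
    (|τ| < (3/2) * ν ^ ((2:ℝ)/3) → ∀ t : ℝ, t ≠ 0 → f 0 < f t) ∧
    (|τ| = (3/2) * ν ^ ((2:ℝ)/3) →
      {t : ℝ | ∀ s : ℝ, f t ≤ f s} = {0, Real.sign τ * ν ^ ((2:ℝ)/3)}) := by
  obtain rfl : f = proxObjective ν τ := funext hf
  obtain ⟨a, ha, rfl⟩ : ∃ a, 0 < a ∧ a ^ 3 = ν :=
    ⟨ν ^ ((1:ℝ)/3), by positivity, by rw [← rpow_natCast, ← rpow_mul hν.le]; norm_num⟩
  have hpow : (a ^ 3) ^ ((2:ℝ)/3) = a ^ 2 := by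
    rw [← rpow_natCast, ← rpow_mul ha.le, ← rpow_natCast]; norm_num
  rw [hpow]
  refine ⟨fun hτ t ht => proxObjective_zero_lt ha hτ ht, fun hτ => ?_⟩
  ext t
  rw [Set.mem_ofPred_eq, Set.mem_insert_iff, Set.mem_singleton_iff,
    ← proxObjective_le_proxObjective_zero_iff ha hτ]
  exact ⟨fun h => h 0, fun h s => h.trans (proxObjective_zero_le ha.le hτ.le s)⟩
end
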